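/- arXiv:1706.06663 — 3 statements merged into one kernel-verified Lean document; each statement's English description precedes it below -/
import Mathlib

section
/- Let g : 2^ℕ → ℕ have modulus of uniform continuity N (if f, h agree on the first N values then g(f) = g(h)), let k = max_{|σ|=N, σ binary} g(σ*0...), and let T be a set of finite binary strings closed under initial segments. If for every binary string τ of length k the infinite sequence τ*0... satisfies (τ*0...) restricted to g(τ*0...) ∉ T, then for every β ∈ 2^ℕ there exists i ≤ k with the initial segment of β of length i not in T. -/
/-
The point of the construction is that the bound k is a bound for g on all of Cantor space:
g(β) = g(σ*0...) for σ the first N bits of β, by uniform continuity. So for τ the first k bits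
of β, the length g(τ*0...) is at most k, the initial segments of length g(τ*0...) of β and of
τ*0... coincide, and the hypothesis on τ says this segment is not in T.
-/

def ext {N : ℕ} (σ : Fin N → Bool) : ℕ → Bool :=
  fun m => if h : m < N then σ ⟨m, h⟩ else false

/-- Initial segment of length n of an infinite binary sequence. -/
def seg (β : ℕ → Bool) (n : ℕ) : List Bool := List.ofFn fun i : Fin n => β i

theorem ext_apply_of_lt (f : ℕ → Bool) {n m : ℕ} (hm : m < n) :
    ext (fun i : Fin n => f i) m = f m := by
  simp [ext, hm]

theorem seg_congr {f h : ℕ → Bool} {n : ℕ} (hfh : ∀ m < n, f m = h m) : seg f n = seg h n :=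
  List.ofFn_inj.mpr (funext fun i => hfh i i.isLt)

theorem le_sup_ext_of_modulus {g : (ℕ → Bool) → ℕ} {N : ℕ}
    (hN : ∀ f h : ℕ → Bool, (∀ m < N, f m = h m) → g f = g h) (f : ℕ → Bool) :
    g f ≤ Finset.univ.sup (fun σ : Fin N → Bool => g (ext σ)) := by
  have hrestrict : g f = g (ext fun i : Fin N => f i) :=
    hN _ _ fun m hm => (ext_apply_of_lt f hm).symm
  rw [hrestrict]
  exact Finset.le_sup (f := fun σ : Fin N → Bool => g (ext σ)) (Finset.mem_univ _)

theorem special_fan_from_MUC_general (g : (ℕ → Bool) → ℕ) (N : ℕ)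
    (hN : ∀ f h : ℕ → Bool, (∀ m < N, f m = h m) → g f = g h)
    (T : Set (List Bool))
    (k : ℕ) (hk : k = Finset.univ.sup (fun σ : Fin N → Bool => g (ext σ)))
    (hcov : ∀ τ : Fin k → Bool, seg (ext τ) (g (ext τ)) ∉ T) :
    ∀ β : ℕ → Bool, ∃ i ≤ k, seg β i ∉ T := by
  intro β
  set τ : Fin k → Bool := fun i => β i
  have hle : g (ext τ) ≤ k := hk ▸ le_sup_ext_of_modulus hN (ext τ)
  refine ⟨g (ext τ), hle, ?_⟩
  rw [seg_congr fun m hm => (ext_apply_of_lt β (hm.trans_le hle)).symm]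
  exact hcov τ

/-- Correctness of the special fan functional built from the intuitionistic
fan functional. -/
theorem special_fan_from_MUC (g : (ℕ → Bool) → ℕ) (N : ℕ)
    (hN : ∀ f h : ℕ → Bool, (∀ m < N, f m = h m) → g f = g h)
    (T : Set (List Bool))
    (hT : ∀ s t : List Bool, s <+: t → t ∈ T → s ∈ T)
    (k : ℕ) (hk : k = Finset.univ.sup (fun σ : Fin N → Bool => g (ext σ)))
    (hcov : ∀ τ : Fin k → Bool, seg (ext τ) (g (ext τ)) ∉ T) :
    ∀ β : ℕ → Bool, ∃ i ≤ k, seg β i ∉ T :=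
  special_fan_from_MUC_general g N hN T k hk hcov
end

section
/- Suppose F : (ℕ → ℕ) → ℕ and there exist a sequence (fₙ) in ℕ → ℕ and f ∈ ℕ → ℕ such that for each n, fₙ agrees with f on the first n values, but F(fₙ) = 0 for all n while F(f) = 1. For h : ℕ → ℕ define g_h by g_h(m) = f(m) if h(k) ≠ 0 for all k ≤ m, and g_h(m) = f_{k₀}(m) otherwise, where k₀ is the least index with h(k₀) = 0. Then g_h = f if h never vanishes, and g_h = f_{k₀} if k₀ is the least zero of h; consequently F(g_h) = 1 if and only if h(k) ≠ 0 for all k. -/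
/-- Grilliot's trick: a pointwise discontinuity of F decides existential
statements about any h. -/
theorem grilliot_trick (F : (ℕ → ℕ) → ℕ) (f : ℕ → ℕ) (fs : ℕ → ℕ → ℕ)
    (hagree : ∀ n m, m < n → fs n m = f m)
    (hFs : ∀ n, F (fs n) = 0) (hF : F f = 1)
    (h : ℕ → ℕ) (g : ℕ → ℕ)
    (hg1 : ∀ m, (∀ k ≤ m, h k ≠ 0) → g m = f m)
    (hg2 : ∀ m k₀, h k₀ = 0 → (∀ k < k₀, h k ≠ 0) → k₀ ≤ m → g m = fs k₀ m) :
    F g = 1 ↔ ∀ k, h k ≠ 0 := by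
  by_cases hz : ∃ k, h k = 0
  · have hk₀ := Nat.find_spec hz
    have hmin : ∀ k < Nat.find hz, h k ≠ 0 := fun k hk => Nat.find_min hz hk
    have hgf : g = fs (Nat.find hz) := by
      funext m
      rcases lt_or_ge m (Nat.find hz) with hm | hm
      · rw [hg1 m (fun k hk => hmin k (lt_of_le_of_lt hk hm)), hagree _ _ hm]
      · exact hg2 m _ hk₀ hmin hm
    rw [hgf, hFs]
    simp only [zero_ne_one, false_iff]
    push_neg
    exact ⟨_, hk₀⟩
  · push_neg at hz
    have : g = f := funext fun m => hg1 m fun k _ => hz k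
    rw [this, hF]
    simpa using hz
end

section
/- Suppose Φ assigns to each binary tree T of positive measure an infinite path Φ(T) through T. Then Φ is not continuous (with respect to the product topology, coding trees as elements of 2^{binary strings}): for every N there exist binary trees T₀, T₁ of measure 1/2 agreeing on all strings of length ≤ N such that Φ(T₀)(0) ≠ Φ(T₁)(0). -/
/-!
The tree `headTree b N` consists of all strings of length `≤ N` together with all strings
starting with `b`. It has measure `1/2`, `headTree false N` and `headTree true N` agree up to
level `N`, and yet every path through `headTree b N` starts with `b`.
-/

open Filter

noncomputable def cnt (T : Set (List Bool)) (n : ℕ) : ℕ :=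
  Nat.card {σ : List Bool // σ ∈ T ∧ σ.length = n}

def IsBinTree (T : Set (List Bool)) : Prop :=
  ∀ s t : List Bool, s <+: t → t ∈ T → s ∈ T

def PosMeasure (T : Set (List Bool)) : Prop :=
  ∃ k : ℕ, 0 < k ∧ ∀ n, (1:ℝ) / k ≤ (cnt T n : ℝ) / 2 ^ n

theorem posMeasure_of_pow_le_mul_cnt {T : Set (List Bool)} {k : ℕ} (hk : 0 < k)
    (h : ∀ n, 2 ^ n ≤ k * cnt T n) : PosMeasure T := by
  refine ⟨k, hk, fun n => ?_⟩
  rw [div_le_div_iff₀ (by positivity) (by positivity), one_mul, mul_comm]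
  exact_mod_cast h n

theorem natCard_vector_bool (n : ℕ) : Nat.card (List.Vector Bool n) = 2 ^ n := by
  simp [Nat.card_eq_fintype_card, card_vector]

theorem cnt_eq_two_pow {T : Set (List Bool)} {n : ℕ} (h : ∀ σ : List Bool, σ.length = n → σ ∈ T) :
    cnt T n = 2 ^ n := by
  rw [← natCard_vector_bool]
  exact Nat.card_congr (Equiv.subtypeEquivRight fun σ => ⟨And.right, fun hσ => ⟨h σ hσ, hσ⟩⟩)

theorem head?_seg_succ (β : ℕ → Bool) (n : ℕ) : (seg β (n + 1)).head? = some (β 0) := by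
  simp [seg, List.ofFn_succ]

def headTree (b : Bool) (N : ℕ) : Set (List Bool) :=
  {σ | σ.length ≤ N ∨ σ.head? = some b}

namespace headTree

variable (b : Bool) (N : ℕ)

theorem isBinTree : IsBinTree (headTree b N) := by
  rintro s t ⟨r, rfl⟩ (hlen | hhead)
  · exact Or.inl (le_trans (by simp) hlen)
  · rcases eq_or_ne s [] with rfl | hs
    · exact Or.inl (Nat.zero_le N)
    · exact Or.inr (by rwa [List.head?_append_of_ne_nil _ hs] at hhead)

theorem cnt_of_le {n : ℕ} (hn : n ≤ N) : cnt (headTree b N) n = 2 ^ n :=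
  cnt_eq_two_pow fun _ hσ => Or.inl (hσ ▸ hn)

theorem cnt_succ_of_le {m : ℕ} (hm : N ≤ m) : cnt (headTree b N) (m + 1) = 2 ^ m := by
  rw [← natCard_vector_bool]
  refine Nat.card_congr
    { toFun := fun σ => ⟨σ.1.tail, by simp [σ.2.2]⟩
      invFun := fun τ => ⟨b :: τ.1, Or.inr rfl, by simp [τ.2]⟩
      left_inv := ?_
      right_inv := fun τ => rfl }
  rintro ⟨_ | ⟨a, σ⟩, hσ, hlen⟩
  · simp at hlen
  · obtain rfl : a = b := by
      simp only [List.length_cons, Nat.add_right_cancel_iff] at hlen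
      simpa [headTree, hlen, hm.not_gt] using hσ
    rfl

theorem two_pow_le_two_mul_cnt (n : ℕ) : 2 ^ n ≤ 2 * cnt (headTree b N) n := by
  rcases le_or_gt n N with hn | hn
  · rw [cnt_of_le b N hn]
    omega
  · obtain ⟨m, rfl⟩ : ∃ m, n = m + 1 := ⟨n - 1, by omega⟩
    rw [cnt_succ_of_le b N (by omega), pow_succ]
    omega

theorem posMeasure : PosMeasure (headTree b N) :=
  posMeasure_of_pow_le_mul_cnt two_pos (two_pow_le_two_mul_cnt b N)

theorem tendsto_cnt_div :
    Tendsto (fun n => (cnt (headTree b N) n : ℝ) / 2 ^ n) atTop (nhds (1 / 2)) := by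
  rw [← tendsto_add_atTop_iff_nat 1]
  refine tendsto_const_nhds.congr' ?_
  filter_upwards [eventually_ge_atTop N] with m hm
  rw [cnt_succ_of_le b N hm, pow_succ]
  push_cast
  field_simp

theorem head_eq_of_seg_mem {β : ℕ → Bool} (h : seg β (N + 1) ∈ headTree b N) : β 0 = b := by
  rcases h with hlen | hhead
  · simp [seg] at hlen
  · rw [head?_seg_succ] at hhead
    exact Option.some_injective _ hhead

end headTree

/-- Any functional selecting paths through positive-measure binary trees is
discontinuous. -/
theorem uniform_WWKL_discontinuous (Φ : Set (List Bool) → (ℕ → Bool))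
    (hΦ : ∀ T, IsBinTree T → PosMeasure T → ∀ n, seg (Φ T) n ∈ T) :
    ∀ N : ℕ, ∃ T₀ T₁ : Set (List Bool),
      IsBinTree T₀ ∧ IsBinTree T₁ ∧
      Tendsto (fun n => (cnt T₀ n : ℝ) / 2 ^ n) atTop (nhds (1/2)) ∧
      Tendsto (fun n => (cnt T₁ n : ℝ) / 2 ^ n) atTop (nhds (1/2)) ∧
      (∀ σ : List Bool, σ.length ≤ N → (σ ∈ T₀ ↔ σ ∈ T₁)) ∧
      Φ T₀ 0 ≠ Φ T₁ 0 := by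
  intro N
  have first_bit (b : Bool) : Φ (headTree b N) 0 = b :=
    headTree.head_eq_of_seg_mem b N
      (hΦ _ (headTree.isBinTree b N) (headTree.posMeasure b N) (N + 1))
  refine ⟨headTree false N, headTree true N, headTree.isBinTree _ _, headTree.isBinTree _ _,
    headTree.tendsto_cnt_div _ _, headTree.tendsto_cnt_div _ _,
    fun σ hσ => by simp [headTree, hσ], by simp [first_bit]⟩
end
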